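/- arXiv:1912.10258 — 4 statements merged into one kernel-verified Lean document; each statement's English description precedes it below -/
import Mathlib

section
/- Let A be an m×n real matrix with restricted isometry constants δ_q, and let k be an even positive integer. Then for every 2k-sparse vector z ∈ ℝⁿ one has ‖Az‖₂² ≥ (1 − 3δ_k)‖z‖₂². -/
open Finset

noncomputable def nsq {ι : Type*} [Fintype ι] (x : ι → ℝ) : ℝ := ∑ i, (x i) ^ 2

noncomputable def n2 {ι : Type*} [Fintype ι] (x : ι → ℝ) : ℝ := Real.sqrt (nsq x)

noncomputable def supp {n : ℕ} (x : Fin n → ℝ) : Finset (Fin n) :=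
  Finset.univ.filter (fun i => x i ≠ 0)

def Sparse {n : ℕ} (k : ℕ) (x : Fin n → ℝ) : Prop := (supp x).card ≤ k

def restr {n : ℕ} (x : Fin n → ℝ) (T : Finset (Fin n)) : Fin n → ℝ :=
  fun i => if i ∈ T then x i else 0

def SatRIP {m n : ℕ} (A : Matrix (Fin m) (Fin n) ℝ) (q : ℕ) (δ : ℝ) : Prop :=
  ∀ z : Fin n → ℝ, Sparse q z →
    (1 - δ) * nsq z ≤ nsq (A.mulVec z) ∧ nsq (A.mulVec z) ≤ (1 + δ) * nsq z

/-- `δ` is the `q`-th order restricted isometry constant of `A`: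
the smallest `δ' ≥ 0` such that `(1-δ')‖z‖² ≤ ‖Az‖² ≤ (1+δ')‖z‖²` for all `q`-sparse `z`. -/
def IsRIC {m n : ℕ} (A : Matrix (Fin m) (Fin n) ℝ) (q : ℕ) (δ : ℝ) : Prop :=
  IsLeast {δ' : ℝ | 0 ≤ δ' ∧ SatRIP A q δ'} δ

/-- membership in `W^k`: binary vectors with exactly `k` entries equal to 1. -/
def InW {n : ℕ} (k : ℕ) (w : Fin n → ℝ) : Prop :=
  (∀ i, w i = 0 ∨ w i = 1) ∧ (Finset.univ.filter (fun i => w i = 1)).card = k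

/-- membership in the polytope `P^k`. -/
def InP {n : ℕ} (k : ℕ) (w : Fin n → ℝ) : Prop :=
  (∑ i, w i) = (k : ℝ) ∧ ∀ i, 0 ≤ w i ∧ w i ≤ 1

/-- `S` is an index set of the `k` largest absolute entries of `x`. -/
def IsTopK {n : ℕ} (x : Fin n → ℝ) (k : ℕ) (S : Finset (Fin n)) : Prop :=
  S.card = k ∧ ∀ i ∈ S, ∀ j ∉ S, |x j| ≤ |x i|

/-- `d` is a hard thresholding `H_k(z)` of `z`. -/
def IsHT {n : ℕ} (k : ℕ) (z d : Fin n → ℝ) : Prop :=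
  Sparse k d ∧ ∀ d' : Fin n → ℝ, Sparse k d' → n2 (z - d) ≤ n2 (z - d')

/-- `w 0, …, w (ω-1)` are successive compression minimizers at `x^p` (with `u^p = up`). -/
def SCM {m n : ℕ} (A : Matrix (Fin m) (Fin n) ℝ) (y : Fin m → ℝ) (k ω : ℕ)
    (up : Fin n → ℝ) (w : ℕ → Fin n → ℝ) : Prop :=
  ∀ j < ω, InP k (w j) ∧ ∀ v : Fin n → ℝ, InP k v →
    n2 (y - A.mulVec (up * (∏ l ∈ Finset.range j, w l) * w j)) ≤
    n2 (y - A.mulVec (up * (∏ l ∈ Finset.range j, w l) * v))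

/-- the `ℓ∞` norm of `x` restricted to `T` (zero if `T` is empty). -/
noncomputable def linfT {n : ℕ} (x : Fin n → ℝ) (T : Finset (Fin n)) : ℝ :=
  if h : T.Nonempty then T.sup' h (fun j => |x j|) else 0

noncomputable def ip {ι : Type*} [Fintype ι] (u v : ι → ℝ) : ℝ := ∑ i, u i * v i

lemma nsq_add' {ι : Type*} [Fintype ι] (u v : ι → ℝ) :
    nsq (u + v) = nsq u + nsq v + 2 * ip u v := by
  simp only [nsq, ip, Pi.add_apply, Finset.mul_sum, ← Finset.sum_add_distrib]
  exact Finset.sum_congr rfl fun i _ => by ring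

lemma nsq_sub' {ι : Type*} [Fintype ι] (u v : ι → ℝ) :
    nsq (u - v) = nsq u + nsq v - 2 * ip u v := by
  simp only [nsq, ip, Pi.sub_apply, Finset.mul_sum, ← Finset.sum_sub_distrib,
    ← Finset.sum_add_distrib]
  exact Finset.sum_congr rfl fun i _ => by ring

lemma ip_add_add {ι : Type*} [Fintype ι] (u1 u2 v1 v2 : ι → ℝ) :
    ip (u1 + u2) (v1 + v2) = ip u1 v1 + ip u1 v2 + ip u2 v1 + ip u2 v2 := by
  simp only [ip, Pi.add_apply, ← Finset.sum_add_distrib]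
  exact Finset.sum_congr rfl fun i _ => by ring

lemma split_finset {α : Type*} [DecidableEq α] (t : ℕ) (s : Finset α) (h : s.card ≤ 2 * t) :
    ∃ a b : Finset α, Disjoint a b ∧ a ∪ b = s ∧ a.card ≤ t ∧ b.card ≤ t := by
  by_cases h' : s.card ≤ t
  · exact ⟨s, ∅, by simp, by simp, h', by simp⟩
  · obtain ⟨a, has, hcard⟩ := Finset.exists_subset_card_eq (le_of_not_ge h')
    refine ⟨a, s \ a, Finset.disjoint_sdiff, Finset.union_sdiff_of_subset has, hcard.le, ?_⟩
    rw [Finset.card_sdiff_of_subset has, hcard]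
    omega

lemma restr_eq_zero {n : ℕ} (z : Fin n → ℝ) {T : Finset (Fin n)} {i : Fin n} (h : i ∉ T) :
    restr z T i = 0 := by simp [restr, h]

lemma restr_supp {n : ℕ} (z : Fin n → ℝ) : restr z (supp z) = z := by
  funext i
  by_cases h : z i = 0 <;> simp [restr, supp, h]

lemma restr_union {n : ℕ} (z : Fin n → ℝ) {a b : Finset (Fin n)} (h : Disjoint a b) :
    restr z (a ∪ b) = restr z a + restr z b := by
  funext i
  simp only [restr, Finset.mem_union, Pi.add_apply]
  by_cases ha : i ∈ a
  · have hb : i ∉ b := Finset.disjoint_left.mp h ha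
    simp [ha, hb]
  · simp [ha]

lemma sparse_combo {n k : ℕ} {a b : Finset (Fin n)} {u : Fin n → ℝ}
    (hu : ∀ i, i ∉ a → i ∉ b → u i = 0) (h : a.card + b.card ≤ k) : Sparse k u := by
  unfold Sparse
  calc (supp u).card ≤ (a ∪ b).card := Finset.card_le_card (by
        intro i hi
        simp only [supp, Finset.mem_filter, Finset.mem_univ, true_and] at hi
        by_contra hc
        simp only [Finset.mem_union, not_or] at hc
        exact hi (hu i hc.1 hc.2))
    _ ≤ a.card + b.card := Finset.card_union_le _ _
    _ ≤ k := h

lemma ip_restr_zero {n : ℕ} (z : Fin n → ℝ) {a b : Finset (Fin n)} (h : Disjoint a b) :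
    ip (restr z a) (restr z b) = 0 := by
  unfold ip
  apply Finset.sum_eq_zero
  intro i _
  by_cases ha : i ∈ a
  · have hb : i ∉ b := Finset.disjoint_left.mp h ha
    simp [restr, hb]
  · simp [restr, ha]

lemma ip_lower {m n k : ℕ} {A : Matrix (Fin m) (Fin n) ℝ} {δ : ℝ}
    (hsat : SatRIP A k δ) {u v : Fin n → ℝ}
    (huv : ip u v = 0) (h1 : Sparse k (u + v)) (h2 : Sparse k (u - v)) :
    -(δ / 2) * (nsq u + nsq v) ≤ ip (A.mulVec u) (A.mulVec v) := by
  have e1 := (hsat _ h1).1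
  have e2 := (hsat _ h2).2
  have n1 : nsq (u + v) = nsq u + nsq v := by rw [nsq_add', huv]; ring
  have n2 : nsq (u - v) = nsq u + nsq v := by rw [nsq_sub', huv]; ring
  rw [n1, Matrix.mulVec_add, nsq_add'] at e1
  rw [n2, Matrix.mulVec_sub, nsq_sub'] at e2
  nlinarith [e1, e2]

theorem stmt0 {m n : ℕ} (A : Matrix (Fin m) (Fin n) ℝ)
    (k : ℕ) (hk : 0 < k) (hke : Even k)
    (δk : ℝ) (hδ : IsRIC A k δk) :
    ∀ z : Fin n → ℝ, Sparse (2 * k) z →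
      (1 - 3 * δk) * nsq z ≤ nsq (A.mulVec z) := by
  obtain ⟨⟨hδ0, hsat⟩, -⟩ := hδ
  intro z hz
  obtain ⟨t, ht⟩ := hke
  obtain ⟨sa, sb, hab, habu, hca, hcb⟩ :=
    split_finset k (supp z) (show (supp z).card ≤ 2 * k from hz)
  obtain ⟨a1, a2, ha, hau, hca1, hca2⟩ := split_finset t sa (by omega)
  obtain ⟨b1, b2, hb, hbu, hcb1, hcb2⟩ := split_finset t sb (by omega)
  have ha1s : a1 ⊆ sa := hau ▸ Finset.subset_union_left
  have ha2s : a2 ⊆ sa := hau ▸ Finset.subset_union_right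
  have hb1s : b1 ⊆ sb := hbu ▸ Finset.subset_union_left
  have hb2s : b2 ⊆ sb := hbu ▸ Finset.subset_union_right
  have d11 : Disjoint a1 b1 := hab.mono ha1s hb1s
  have d12 : Disjoint a1 b2 := hab.mono ha1s hb2s
  have d21 : Disjoint a2 b1 := hab.mono ha2s hb1s
  have d22 : Disjoint a2 b2 := hab.mono ha2s hb2s
  set x1 := restr z a1 with hx1
  set x2 := restr z a2 with hx2
  set y1 := restr z b1 with hy1
  set y2 := restr z b2 with hy2
  have hzsplit : (x1 + x2) + (y1 + y2) = z := by
    rw [hx1, hx2, hy1, hy2, ← restr_union z ha, ← restr_union z hb, hau, hbu,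
      ← restr_union z hab, habu, restr_supp]
  -- sparsity facts
  have sx : Sparse k (x1 + x2) := sparse_combo (a := a1) (b := a2)
    (fun i h1 h2 => by simp [hx1, hx2, restr_eq_zero z h1, restr_eq_zero z h2]) (by omega)
  have sy : Sparse k (y1 + y2) := sparse_combo (a := b1) (b := b2)
    (fun i h1 h2 => by simp [hy1, hy2, restr_eq_zero z h1, restr_eq_zero z h2]) (by omega)
  have s11p : Sparse k (x1 + y1) := sparse_combo (a := a1) (b := b1)
    (fun i h1 h2 => by simp [hx1, hy1, restr_eq_zero z h1, restr_eq_zero z h2]) (by omega)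
  have s11m : Sparse k (x1 - y1) := sparse_combo (a := a1) (b := b1)
    (fun i h1 h2 => by simp [hx1, hy1, restr_eq_zero z h1, restr_eq_zero z h2]) (by omega)
  have s12p : Sparse k (x1 + y2) := sparse_combo (a := a1) (b := b2)
    (fun i h1 h2 => by simp [hx1, hy2, restr_eq_zero z h1, restr_eq_zero z h2]) (by omega)
  have s12m : Sparse k (x1 - y2) := sparse_combo (a := a1) (b := b2)
    (fun i h1 h2 => by simp [hx1, hy2, restr_eq_zero z h1, restr_eq_zero z h2]) (by omega)
  have s21p : Sparse k (x2 + y1) := sparse_combo (a := a2) (b := b1)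
    (fun i h1 h2 => by simp [hx2, hy1, restr_eq_zero z h1, restr_eq_zero z h2]) (by omega)
  have s21m : Sparse k (x2 - y1) := sparse_combo (a := a2) (b := b1)
    (fun i h1 h2 => by simp [hx2, hy1, restr_eq_zero z h1, restr_eq_zero z h2]) (by omega)
  have s22p : Sparse k (x2 + y2) := sparse_combo (a := a2) (b := b2)
    (fun i h1 h2 => by simp [hx2, hy2, restr_eq_zero z h1, restr_eq_zero z h2]) (by omega)
  have s22m : Sparse k (x2 - y2) := sparse_combo (a := a2) (b := b2)
    (fun i h1 h2 => by simp [hx2, hy2, restr_eq_zero z h1, restr_eq_zero z h2]) (by omega)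
  -- inner product bounds
  have c11 := ip_lower hsat (ip_restr_zero z d11) s11p s11m
  have c12 := ip_lower hsat (ip_restr_zero z d12) s12p s12m
  have c21 := ip_lower hsat (ip_restr_zero z d21) s21p s21m
  have c22 := ip_lower hsat (ip_restr_zero z d22) s22p s22m
  -- RIP lower bounds on the two halves
  have e1 := (hsat _ sx).1
  have e2 := (hsat _ sy).1
  -- norm splittings
  have nx : nsq (x1 + x2) = nsq x1 + nsq x2 := by
    rw [nsq_add', ip_restr_zero z ha]; ring
  have ny : nsq (y1 + y2) = nsq y1 + nsq y2 := by
    rw [nsq_add', ip_restr_zero z hb]; ring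
  have nz : nsq z = nsq x1 + nsq x2 + nsq y1 + nsq y2 := by
    rw [← hzsplit, nsq_add', nx, ny, ip_add_add, ip_restr_zero z d11, ip_restr_zero z d12,
      ip_restr_zero z d21, ip_restr_zero z d22]
    ring
  have hexp : nsq (A.mulVec z) = nsq (A.mulVec (x1 + x2)) + nsq (A.mulVec (y1 + y2))
      + 2 * (ip (A.mulVec x1) (A.mulVec y1) + ip (A.mulVec x1) (A.mulVec y2)
        + ip (A.mulVec x2) (A.mulVec y1) + ip (A.mulVec x2) (A.mulVec y2)) := by
    rw [← hzsplit, Matrix.mulVec_add, nsq_add', Matrix.mulVec_add, Matrix.mulVec_add,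
      ip_add_add]
  rw [nz, hexp]
  rw [nx] at e1
  rw [ny] at e2
  nlinarith [c11, c12, c21, c22, e1, e2]
end

section
/- Let A be an m×n real matrix with restricted isometry constants δ_q and let k be an even positive integer. Let h and z be k-sparse vectors in ℝⁿ, and let ŵ ∈ {0,1}ⁿ be a k-sparse binary vector such that supp(h) ⊆ supp(ŵ). Then ‖[(I − AᵀA)(h − z)] ⊗ ŵ‖₂ ≤ √5 · δ_k · ‖h − z‖₂. -/
open Finset

/-! Write `u = h - z`, `S = supp ŵ` and `T = supp u \ S ⊆ supp z`. Multiplying by `ŵ` restricts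
to `S`, so for `v = ((I - AᵀA) u)|_S` we get
`‖v‖² = ⟨v, (I - AᵀA) u_S⟩ + ⟨v, (I - AᵀA) u_T⟩`.
By polarization, the RIP gives `|⟨x, (I - AᵀA) y⟩| ≤ δ_k ‖x‖ ‖y‖` when `x` and `y` are supported in
a common set of size `k`. This bounds the first term directly; for the second, split `S` and `T`
into halves of size at most `k/2` to get `2 δ_k ‖v‖ ‖u_T‖`. Hence
`‖v‖ ≤ δ_k (‖u_S‖ + 2 ‖u_T‖) ≤ √5 δ_k ‖u‖` by Cauchy–Schwarz. -/

open Matrix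

section Norms

variable {ι : Type*} [Fintype ι]

lemma nsq_eq_dotProduct (x : ι → ℝ) : nsq x = x ⬝ᵥ x := by
  simp only [nsq, dotProduct, sq]

lemma nsq_nonneg (x : ι → ℝ) : 0 ≤ nsq x :=
  Finset.sum_nonneg fun i _ => sq_nonneg (x i)

lemma n2_nonneg (x : ι → ℝ) : 0 ≤ n2 x := Real.sqrt_nonneg _

lemma n2_sq (x : ι → ℝ) : n2 x ^ 2 = nsq x := Real.sq_sqrt (nsq_nonneg x)

lemma n2_eq_zero {x : ι → ℝ} : n2 x = 0 ↔ x = 0 := by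
  rw [n2, Real.sqrt_eq_zero (nsq_nonneg x), nsq,
    Finset.sum_eq_zero_iff_of_nonneg fun i _ => sq_nonneg (x i)]
  simp [funext_iff]

lemma nsq_smul (c : ℝ) (x : ι → ℝ) : nsq (c • x) = c ^ 2 * nsq x := by
  simp only [nsq_eq_dotProduct, dotProduct_smul, smul_dotProduct, smul_eq_mul]
  ring

lemma nsq_add_sub_nsq_sub (x y : ι → ℝ) : nsq (x + y) - nsq (x - y) = 4 * (x ⬝ᵥ y) := by
  simp only [nsq_eq_dotProduct, add_dotProduct, dotProduct_add, sub_dotProduct,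
    dotProduct_sub, dotProduct_comm y x]
  ring

lemma nsq_add_add_nsq_sub (x y : ι → ℝ) :
    nsq (x + y) + nsq (x - y) = 2 * nsq x + 2 * nsq y := by
  simp only [nsq_eq_dotProduct, add_dotProduct, dotProduct_add, sub_dotProduct,
    dotProduct_sub, dotProduct_comm y x]
  ring

end Norms

lemma mul_add_mul_le_sqrt_mul_sqrt (p q a b : ℝ) :
    p * a + q * b ≤ √(p ^ 2 + q ^ 2) * √(a ^ 2 + b ^ 2) := by
  rw [← Real.sqrt_mul (by positivity)]
  exact (le_abs_self _).trans
    (Real.abs_le_sqrt (by nlinarith [sq_nonneg (p * b - q * a)]))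

lemma Finset.exists_subset_card_le_and_card_sdiff_le {α : Type*} [DecidableEq α]
    {C : Finset α} {t : ℕ} (h : C.card ≤ t + t) : ∃ C₁ ⊆ C, C₁.card ≤ t ∧ (C \ C₁).card ≤ t := by
  obtain ⟨C₁, hsub, hcard⟩ := Finset.exists_subset_card_eq (min_le_right t C.card)
  refine ⟨C₁, hsub, hcard ▸ min_le_left t C.card, ?_⟩
  rw [Finset.card_sdiff_of_subset hsub, hcard]
  omega

section Restriction

variable {n : ℕ}

@[simp]
lemma mem_supp {x : Fin n → ℝ} {i : Fin n} : i ∈ supp x ↔ x i ≠ 0 := by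
  simp [supp]

lemma supp_subset_iff {x : Fin n → ℝ} {U : Finset (Fin n)} :
    supp x ⊆ U ↔ ∀ i ∉ U, x i = 0 := by
  simp only [Finset.subset_iff, mem_supp]
  exact forall_congr' fun _ => not_imp_comm

lemma supp_restr_subset (x : Fin n → ℝ) (T : Finset (Fin n)) : supp (restr x T) ⊆ T :=
  supp_subset_iff.2 fun _ hi => if_neg hi

lemma restr_eq_self {x : Fin n → ℝ} {T : Finset (Fin n)} (h : supp x ⊆ T) : restr x T = x :=
  funext fun i => by
    by_cases hi : i ∈ T
    · exact if_pos hi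
    · simp [restr, hi, supp_subset_iff.1 h i hi]

lemma mul_eq_restr_supp {w : Fin n → ℝ} (hw : ∀ i, w i = 0 ∨ w i = 1) (x : Fin n → ℝ) :
    x * w = restr x (supp w) :=
  funext fun i => by
    rcases hw i with h0 | h1
    · simp [restr, h0]
    · simp [restr, h1]

lemma supp_sub_sdiff_subset {x y : Fin n → ℝ} {S : Finset (Fin n)} (hx : supp x ⊆ S) :
    supp (x - y) \ S ⊆ supp y := fun i hi => by
  obtain ⟨hi_supp, hiS⟩ := Finset.mem_sdiff.1 hi
  have hxi : x i = 0 := supp_subset_iff.1 hx i hiS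
  simp_all

lemma restr_add_restr {x : Fin n → ℝ} {S T : Finset (Fin n)} (hd : Disjoint S T)
    (hx : supp x ⊆ S ∪ T) : restr x S + restr x T = x := by
  refine (funext fun i => ?_).trans (restr_eq_self hx)
  by_cases hS : i ∈ S
  · simp [restr, hS, Finset.disjoint_left.1 hd hS]
  · simp [restr, hS]

lemma nsq_restr_add_nsq_restr {x : Fin n → ℝ} {S T : Finset (Fin n)} (hd : Disjoint S T)
    (hx : supp x ⊆ S ∪ T) : nsq (restr x S) + nsq (restr x T) = nsq x := by
  conv_rhs => rw [← restr_eq_self hx]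
  simp only [nsq, ← Finset.sum_add_distrib]
  refine Finset.sum_congr rfl fun i _ => ?_
  by_cases hS : i ∈ S
  · simp [restr, hS, Finset.disjoint_left.1 hd hS]
  · simp [restr, hS]

lemma nsq_restr_eq_dotProduct (y : Fin n → ℝ) (S : Finset (Fin n)) :
    nsq (restr y S) = restr y S ⬝ᵥ y := by
  simp only [nsq, dotProduct, restr]
  refine Finset.sum_congr rfl fun i _ => ?_
  split_ifs <;> ring

lemma supp_subset_union_sdiff {x : Fin n → ℝ} {S S₁ : Finset (Fin n)} (hS₁ : S₁ ⊆ S)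
    (hx : supp x ⊆ S) : supp x ⊆ S₁ ∪ (S \ S₁) := by
  rwa [Finset.union_sdiff_of_subset hS₁]

lemma n2_restr_add_n2_restr_sdiff_le {x : Fin n → ℝ} {S S₁ : Finset (Fin n)} (hS₁ : S₁ ⊆ S)
    (hx : supp x ⊆ S) : n2 (restr x S₁) + n2 (restr x (S \ S₁)) ≤ √2 * n2 x := by
  have := mul_add_mul_le_sqrt_mul_sqrt 1 1 (n2 (restr x S₁)) (n2 (restr x (S \ S₁)))
  rwa [n2_sq, n2_sq, nsq_restr_add_nsq_restr Finset.disjoint_sdiff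
    (supp_subset_union_sdiff hS₁ hx), one_pow, one_add_one_eq_two, one_mul, one_mul] at this

end Restriction

section RIP

variable {m n : ℕ} {A : Matrix (Fin m) (Fin n) ℝ} {k : ℕ} {δ : ℝ}

lemma dotProduct_one_sub_transpose_mul_mulVec (A : Matrix (Fin m) (Fin n) ℝ)
    (x y : Fin n → ℝ) : x ⬝ᵥ ((1 - Aᵀ * A) *ᵥ y) = x ⬝ᵥ y - A *ᵥ x ⬝ᵥ A *ᵥ y := by
  rw [sub_mulVec, one_mulVec, dotProduct_sub, ← mulVec_mulVec, dotProduct_mulVec,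
    vecMul_transpose]

lemma SatRIP.abs_nsq_mulVec_sub_le (hA : SatRIP A k δ) {w : Fin n → ℝ} (hw : Sparse k w) :
    |nsq (A *ᵥ w) - nsq w| ≤ δ * nsq w := by
  obtain ⟨hlow, hup⟩ := hA w hw
  rw [abs_le]
  constructor <;> linarith

lemma SatRIP.abs_dotProduct_le_half (hA : SatRIP A k δ) {U : Finset (Fin n)}
    (hU : U.card ≤ k) {x y : Fin n → ℝ} (hx : supp x ⊆ U) (hy : supp y ⊆ U) :
    |x ⬝ᵥ ((1 - Aᵀ * A) *ᵥ y)| ≤ δ / 2 * (nsq x + nsq y) := by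
  have hsparse : ∀ w : Fin n → ℝ, supp w ⊆ U → Sparse k w := fun w hw =>
    (Finset.card_le_card hw).trans hU
  have hadd := hA.abs_nsq_mulVec_sub_le (hsparse (x + y) (supp_subset_iff.2 fun i hi => by
    simp [supp_subset_iff.1 hx i hi, supp_subset_iff.1 hy i hi]))
  have hsub := hA.abs_nsq_mulVec_sub_le (hsparse (x - y) (supp_subset_iff.2 fun i hi => by
    simp [supp_subset_iff.1 hx i hi, supp_subset_iff.1 hy i hi]))
  rw [mulVec_add] at hadd
  rw [mulVec_sub] at hsub
  have hpol := nsq_add_sub_nsq_sub x y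
  have hpolA := nsq_add_sub_nsq_sub (A *ᵥ x) (A *ᵥ y)
  have hpar : δ * nsq (x + y) + δ * nsq (x - y) = δ * (2 * nsq x + 2 * nsq y) := by
    rw [← mul_add, nsq_add_add_nsq_sub]
  rw [dotProduct_one_sub_transpose_mul_mulVec, abs_le]
  rw [abs_le] at hadd hsub
  constructor <;> linarith

-- Apply the polarization bound to `‖y‖ • x` and `‖x‖ • y`.
lemma SatRIP.abs_dotProduct_le (hA : SatRIP A k δ) {U : Finset (Fin n)}
    (hU : U.card ≤ k) {x y : Fin n → ℝ} (hx : supp x ⊆ U) (hy : supp y ⊆ U) :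
    |x ⬝ᵥ ((1 - Aᵀ * A) *ᵥ y)| ≤ δ * n2 x * n2 y := by
  rcases (mul_nonneg (n2_nonneg x) (n2_nonneg y)).eq_or_lt with hxy | hxy
  · rw [mul_assoc, ← hxy, mul_zero, abs_nonpos_iff]
    rcases mul_eq_zero.1 hxy.symm with h0 | h0 <;> simp [n2_eq_zero.1 h0]
  have hsmul : ∀ (c : ℝ) (w : Fin n → ℝ), supp w ⊆ U → supp (c • w) ⊆ U := fun c w hw =>
    supp_subset_iff.2 fun i hi => by simp [supp_subset_iff.1 hw i hi]
  have h := hA.abs_dotProduct_le_half hU (hsmul (n2 y) x hx) (hsmul (n2 x) y hy)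
  rw [mulVec_smul, smul_dotProduct, dotProduct_smul, smul_smul, smul_eq_mul, abs_mul,
    abs_of_pos (by linarith), nsq_smul, nsq_smul, ← n2_sq x, ← n2_sq y] at h
  have : n2 y * n2 x * |x ⬝ᵥ ((1 - Aᵀ * A) *ᵥ y)| ≤ n2 y * n2 x * (δ * n2 x * n2 y) := by
    linarith
  exact le_of_mul_le_mul_left this (by linarith)

lemma SatRIP.abs_dotProduct_le_two_mul {t : ℕ} (hA : SatRIP A (t + t) δ) (hδ : 0 ≤ δ)
    {S T : Finset (Fin n)} (hS : S.card ≤ t + t) (hT : T.card ≤ t + t) {x y : Fin n → ℝ}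
    (hx : supp x ⊆ S) (hy : supp y ⊆ T) :
    |x ⬝ᵥ ((1 - Aᵀ * A) *ᵥ y)| ≤ 2 * δ * n2 x * n2 y := by
  obtain ⟨S₁, hS₁, hS₁t, hS₂t⟩ := Finset.exists_subset_card_le_and_card_sdiff_le hS
  obtain ⟨T₁, hT₁, hT₁t, hT₂t⟩ := Finset.exists_subset_card_le_and_card_sdiff_le hT
  have hpiece : ∀ {P Q : Finset (Fin n)}, P.card ≤ t → Q.card ≤ t →
      |restr x P ⬝ᵥ ((1 - Aᵀ * A) *ᵥ restr y Q)| ≤ δ * n2 (restr x P) * n2 (restr y Q) :=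
    fun hP hQ => hA.abs_dotProduct_le ((Finset.card_union_le _ _).trans (add_le_add hP hQ))
      ((supp_restr_subset _ _).trans Finset.subset_union_left)
      ((supp_restr_subset _ _).trans Finset.subset_union_right)
  have h11 := hpiece hS₁t hT₁t
  have h12 := hpiece hS₁t hT₂t
  have h21 := hpiece hS₂t hT₁t
  have h22 := hpiece hS₂t hT₂t
  have hxs := n2_restr_add_n2_restr_sdiff_le hS₁ hx
  have hys := n2_restr_add_n2_restr_sdiff_le hT₁ hy
  have hprod : (n2 (restr x S₁) + n2 (restr x (S \ S₁))) *
      (n2 (restr y T₁) + n2 (restr y (T \ T₁))) ≤ 2 * (n2 x * n2 y) := by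
    calc _ ≤ (√2 * n2 x) * (√2 * n2 y) :=
          mul_le_mul hxs hys (add_nonneg (n2_nonneg _) (n2_nonneg _))
            (mul_nonneg (Real.sqrt_nonneg 2) (n2_nonneg x))
      _ = 2 * (n2 x * n2 y) := by
          rw [mul_mul_mul_comm, Real.mul_self_sqrt zero_le_two]
  conv_lhs => rw [← restr_add_restr Finset.disjoint_sdiff (supp_subset_union_sdiff hS₁ hx),
    ← restr_add_restr Finset.disjoint_sdiff (supp_subset_union_sdiff hT₁ hy),
    mulVec_add, dotProduct_add, add_dotProduct, add_dotProduct]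
  refine (abs_add_le _ _).trans ((add_le_add (abs_add_le _ _) (abs_add_le _ _)).trans ?_)
  linarith [mul_le_mul_of_nonneg_left hprod hδ]

end RIP

theorem stmt1_general {m n : ℕ} (A : Matrix (Fin m) (Fin n) ℝ)
    (k : ℕ) (hke : Even k)
    (δk : ℝ) (hδ : IsRIC A k δk)
    (h z wh : Fin n → ℝ) (hz : Sparse k z)
    (hwh01 : ∀ i, wh i = 0 ∨ wh i = 1) (hwhk : Sparse k wh)
    (hsupp : supp h ⊆ supp wh) :
    n2 ((((1 : Matrix (Fin n) (Fin n) ℝ) - A.transpose * A).mulVec (h - z)) * wh)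
      ≤ Real.sqrt 5 * δk * n2 (h - z) := by
  obtain ⟨hδ0, hA⟩ := hδ.1
  obtain ⟨t, rfl⟩ := hke
  rw [mul_eq_restr_supp hwh01]
  set u := h - z
  set S := supp wh
  set v := restr ((1 - Aᵀ * A) *ᵥ u) S
  have hT : (supp u \ S).card ≤ t + t :=
    (Finset.card_le_card (supp_sub_sdiff_subset hsupp)).trans hz
  have hu : supp u ⊆ S ∪ (supp u \ S) := by
    rw [Finset.union_sdiff_self_eq_union]
    exact Finset.subset_union_right
  have hv : nsq v ≤ δk * n2 v * (n2 (restr u S) + 2 * n2 (restr u (supp u \ S))) := by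
    calc nsq v = v ⬝ᵥ ((1 - Aᵀ * A) *ᵥ restr u S)
          + v ⬝ᵥ ((1 - Aᵀ * A) *ᵥ restr u (supp u \ S)) := by
          rw [← dotProduct_add, ← mulVec_add, restr_add_restr Finset.disjoint_sdiff hu,
            nsq_restr_eq_dotProduct]
      _ ≤ δk * n2 v * n2 (restr u S) + 2 * δk * n2 v * n2 (restr u (supp u \ S)) :=
          add_le_add
            ((le_abs_self _).trans (hA.abs_dotProduct_le hwhk (supp_restr_subset _ _)
              (supp_restr_subset _ _)))
            ((le_abs_self _).trans (hA.abs_dotProduct_le_two_mul hδ0 hwhk hT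
              (supp_restr_subset _ _) (supp_restr_subset _ _)))
      _ = _ := by ring
  have hu5 : n2 (restr u S) + 2 * n2 (restr u (supp u \ S)) ≤ √5 * n2 u := by
    have := mul_add_mul_le_sqrt_mul_sqrt 1 2 (n2 (restr u S)) (n2 (restr u (supp u \ S)))
    rwa [n2_sq, n2_sq, nsq_restr_add_nsq_restr Finset.disjoint_sdiff hu, one_mul,
      show (1 : ℝ) ^ 2 + 2 ^ 2 = 5 by norm_num] at this
  rw [← n2_sq] at hv
  have hsq : n2 v ^ 2 ≤ √5 * δk * n2 u * n2 v :=
    hv.trans ((mul_le_mul_of_nonneg_left hu5 (mul_nonneg hδ0 (n2_nonneg v))).trans_eq (by ring))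
  nlinarith [n2_nonneg v, mul_nonneg (mul_nonneg (Real.sqrt_nonneg 5) hδ0) (n2_nonneg u)]

theorem stmt1 {m n : ℕ} (A : Matrix (Fin m) (Fin n) ℝ)
    (k : ℕ) (hk : 0 < k) (hke : Even k)
    (δk : ℝ) (hδ : IsRIC A k δk)
    (h z wh : Fin n → ℝ) (hh : Sparse k h) (hz : Sparse k z)
    (hwh01 : ∀ i, wh i = 0 ∨ wh i = 1) (hwhk : Sparse k wh)
    (hsupp : supp h ⊆ supp wh) :
    n2 ((((1 : Matrix (Fin n) (Fin n) ℝ) - A.transpose * A).mulVec (h - z)) * wh)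
      ≤ Real.sqrt 5 * δk * n2 (h - z) :=
  stmt1_general A k hke δk hδ h z wh hz hwh01 hwhk hsupp
end

section
/- Let k and τ be positive integers and let w ∈ ℝⁿ satisfy Σᵢ wᵢ = k and 0 ≤ wᵢ ≤ 1 for all i. Let Λ ⊆ {1,…,n} be partitioned into pairwise disjoint sets Λ₁, …, Λ_q with |Λᵢ| = τ for i = 1,…,q−1 and |Λ_q| ≤ τ, ordered so that min_{j∈Λᵢ} w_j ≥ max_{j∈Λ_{i+1}} w_j for each i = 1,…,q−1 (i.e., Λ₁ holds the τ largest values of w on Λ, Λ₂ the next τ largest, and so on). Then Σ_{i=1}^{q} ‖w_{Λᵢ}‖_∞ < (τ + k)/τ. -/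
open Finset

lemma linfT_nonneg' {n : ℕ} (w : Fin n → ℝ) (T : Finset (Fin n)) : 0 ≤ linfT w T := by
  unfold linfT
  split
  · next h =>
    obtain ⟨j, hj⟩ := h
    exact le_trans (abs_nonneg (w j)) (Finset.le_sup' (fun j => |w j|) hj)
  · exact le_refl 0

lemma linfT_le_one' {n : ℕ} (w : Fin n → ℝ) (hbnd : ∀ i, 0 ≤ w i ∧ w i ≤ 1)
    (T : Finset (Fin n)) : linfT w T ≤ 1 := by
  unfold linfT
  split
  · next h =>
    exact Finset.sup'_le h _ (fun j _ => by
      rw [abs_of_nonneg (hbnd j).1]; exact (hbnd j).2)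
  · norm_num

lemma linfT_zero_of_sum_zero {n : ℕ} (w : Fin n → ℝ) (hbnd : ∀ i, 0 ≤ w i)
    (T : Finset (Fin n)) (h : ∑ j ∈ T, w j = 0) : linfT w T = 0 := by
  have hz : ∀ j ∈ T, w j = 0 := by
    intro j hj
    exact (Finset.sum_eq_zero_iff_of_nonneg (fun i _ => hbnd i)).mp h j hj
  unfold linfT
  split
  · next hne =>
    apply le_antisymm
    · exact Finset.sup'_le hne _ (fun j hj => by rw [hz j hj]; simp)
    · obtain ⟨j, hj⟩ := hne
      exact le_trans (abs_nonneg (w j)) (Finset.le_sup' (fun j => |w j|) hj)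
  · rfl

lemma key_step {n : ℕ} (τ : ℕ) (w : Fin n → ℝ) (hbnd : ∀ i, 0 ≤ w i)
    (T S : Finset (Fin n)) (hT : T.card = τ)
    (hord : ∀ a ∈ T, ∀ b ∈ S, w b ≤ w a) :
    (τ : ℝ) * linfT w S ≤ ∑ j ∈ T, w j := by
  by_cases hS : S.Nonempty
  · obtain ⟨b, hb, hbeq⟩ := Finset.exists_mem_eq_sup' hS (fun j => |w j|)
    have hlin : linfT w S = w b := by
      unfold linfT; rw [dif_pos hS, hbeq]; exact abs_of_nonneg (hbnd b)
    rw [hlin]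
    calc (τ : ℝ) * w b = ∑ _j ∈ T, w b := by
          rw [Finset.sum_const, hT, nsmul_eq_mul]
      _ ≤ ∑ j ∈ T, w j := Finset.sum_le_sum (fun a ha => hord a ha b hb)
  · have : linfT w S = 0 := by unfold linfT; rw [dif_neg hS]
    rw [this, mul_zero]
    exact Finset.sum_nonneg (fun j _ => hbnd j)

lemma block_sum_le {n : ℕ} (w : Fin n → ℝ) (hbnd : ∀ i, 0 ≤ w i)
    (q : ℕ) (Λs : ℕ → Finset (Fin n))
    (hdisj : ∀ i < q, ∀ j < q, i ≠ j → Disjoint (Λs i) (Λs j)) :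
    ∑ i ∈ Finset.range q, ∑ j ∈ Λs i, w j ≤ ∑ i, w i := by
  rw [← Finset.sum_biUnion (by
    intro a ha b hb hab
    exact hdisj a (Finset.mem_range.mp (Finset.mem_coe.mp ha)) b
      (Finset.mem_range.mp (Finset.mem_coe.mp hb)) hab)]
  exact Finset.sum_le_sum_of_subset_of_nonneg (Finset.subset_univ _)
    (fun i _ _ => hbnd i)

lemma main_aux {n : ℕ} (k τ : ℕ) (hk : 0 < k) (hτ : 0 < τ)
    (w : Fin n → ℝ) (hsum : ∑ i, w i = (k : ℝ)) (hbnd : ∀ i, 0 ≤ w i ∧ w i ≤ 1) :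
    ∀ q : ℕ, ∀ Λs : ℕ → Finset (Fin n),
    (∀ i < q, ∀ j < q, i ≠ j → Disjoint (Λs i) (Λs j)) →
    (∀ i, i + 1 < q → (Λs i).card = τ) →
    (∀ i, i + 1 < q → ∀ a ∈ Λs i, ∀ b ∈ Λs (i + 1), w b ≤ w a) →
    ∑ i ∈ Finset.range q, linfT w (Λs i) < ((τ : ℝ) + (k : ℝ)) / (τ : ℝ) := by
  have hτR : (0:ℝ) < (τ:ℝ) := by exact_mod_cast hτ
  have hkR : (0:ℝ) < (k:ℝ) := by exact_mod_cast hk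
  have hbase : (1:ℝ) < ((τ : ℝ) + (k : ℝ)) / (τ : ℝ) := by
    rw [lt_div_iff₀ hτR, one_mul]; linarith
  intro q
  induction q with
  | zero =>
    intro Λs _ _ _
    simp only [Finset.range_zero, Finset.sum_empty]
    positivity
  | succ q ih =>
    intro Λs hdisj hcard horder
    set s := ∑ j ∈ Λs q, w j with hs
    have hsnn : 0 ≤ s := Finset.sum_nonneg (fun j _ => (hbnd j).1)
    by_cases hs0 : s = 0
    · -- last block contributes 0
      have hlast0 : linfT w (Λs q) = 0 :=
        linfT_zero_of_sum_zero w (fun i => (hbnd i).1) _ hs0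
      rw [Finset.sum_range_succ, hlast0, add_zero]
      exact ih Λs
        (fun i hi j hj hij => hdisj i (Nat.lt_succ_of_lt hi) j (Nat.lt_succ_of_lt hj) hij)
        (fun i hi => hcard i (Nat.lt_succ_of_lt hi))
        (fun i hi => horder i (Nat.lt_succ_of_lt hi))
    · have hspos : 0 < s := lt_of_le_of_ne hsnn (Ne.symm hs0)
      -- sum of block sums over range (q+1) ≤ k
      have htot : ∑ i ∈ Finset.range (q+1), ∑ j ∈ Λs i, w j ≤ (k : ℝ) := by
        rw [← hsum]
        exact block_sum_le w (fun i => (hbnd i).1) (q+1) Λs hdisj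
      have htot' : ∑ i ∈ Finset.range q, ∑ j ∈ Λs i, w j ≤ (k : ℝ) - s := by
        rw [Finset.sum_range_succ, ← hs] at htot; linarith
      -- shift decomposition
      rw [Finset.sum_range_succ']
      have h1 : linfT w (Λs 0) ≤ 1 := linfT_le_one' w hbnd (Λs 0)
      have h2 : ∀ i ∈ Finset.range q, linfT w (Λs (i+1)) ≤
          (∑ j ∈ Λs i, w j) / (τ : ℝ) := by
        intro i hi
        have hi' : i + 1 < q + 1 := Nat.succ_lt_succ (Finset.mem_range.mp hi)
        have := key_step τ w (fun i => (hbnd i).1) (Λs i) (Λs (i+1))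
          (hcard i hi') (horder i hi')
        rw [le_div_iff₀ hτR]
        linarith [this]
      have h3 : ∑ i ∈ Finset.range q, linfT w (Λs (i+1)) ≤
          (∑ i ∈ Finset.range q, ∑ j ∈ Λs i, w j) / (τ : ℝ) := by
        rw [Finset.sum_div]
        exact Finset.sum_le_sum h2
      have h4 : (∑ i ∈ Finset.range q, ∑ j ∈ Λs i, w j) / (τ : ℝ) ≤
          ((k : ℝ) - s) / (τ : ℝ) := by
        gcongr
      calc ∑ i ∈ Finset.range q, linfT w (Λs (i+1)) + linfT w (Λs 0)
          ≤ ((k : ℝ) - s) / (τ : ℝ) + 1 := by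
            have := le_trans h3 h4; linarith
        _ < ((τ : ℝ) + (k : ℝ)) / (τ : ℝ) := by
            rw [div_add' _ _ _ (ne_of_gt hτR), div_lt_div_iff₀ hτR hτR]
            ring_nf
            nlinarith

theorem stmt6 {n : ℕ} (k τ : ℕ) (hk : 0 < k) (hτ : 0 < τ)
    (w : Fin n → ℝ) (hsum : ∑ i, w i = (k : ℝ)) (hbnd : ∀ i, 0 ≤ w i ∧ w i ≤ 1)
    (Λ : Finset (Fin n)) (q : ℕ) (hq : 1 ≤ q) (Λs : ℕ → Finset (Fin n))
    (hunion : Λ = (Finset.range q).biUnion Λs)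
    (hdisj : ∀ i < q, ∀ j < q, i ≠ j → Disjoint (Λs i) (Λs j))
    (hcard : ∀ i, i + 1 < q → (Λs i).card = τ)
    (hlast : (Λs (q - 1)).card ≤ τ)
    (horder : ∀ i, i + 1 < q → ∀ a ∈ Λs i, ∀ b ∈ Λs (i + 1), w b ≤ w a) :
    ∑ i ∈ Finset.range q, linfT w (Λs i) < ((τ : ℝ) + (k : ℝ)) / (τ : ℝ) := by
  exact main_aux k τ hk hτ w hsum hbnd q Λs hdisj hcard horder
end

section
/- Let ŵ ∈ W^k satisfy supp(x_S) ⊆ supp(ŵ), let x^p ∈ ℝⁿ be k-sparse, u^p = x^p + Aᵀ(y − A x^p), and let w^(1), …, w^(ω) ∈ P^k be successive compression minimizers at x^p. Then ‖y − A[u^p ⊗ (w^(1) ⊗ ⋯ ⊗ w^(ω))]‖₂ ≤ ‖y − A(u^p ⊗ ŵ)‖₂ + Σ_{i=1}^{ω−1} ‖A[(u^p − x_S) ⊗ (w^(1) ⊗ ⋯ ⊗ w^(i)) ⊗ (e − ŵ)]‖₂. -/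
open Finset

lemma n2_eq_norm {ι : Type*} [Fintype ι] (x : ι → ℝ) :
    n2 x = ‖(WithLp.equiv 2 (ι → ℝ)).symm x‖ := by
  simp [n2, nsq, EuclideanSpace.norm_eq, Real.norm_eq_abs, sq_abs]

lemma n2_triangle {ι : Type*} [Fintype ι] (a b : ι → ℝ) : n2 (a + b) ≤ n2 a + n2 b := by
  rw [n2_eq_norm, n2_eq_norm, n2_eq_norm]
  exact norm_add_le ((WithLp.equiv 2 (ι → ℝ)).symm a) ((WithLp.equiv 2 (ι → ℝ)).symm b)

lemma inW_inP {n k : ℕ} {wh : Fin n → ℝ} (h : InW k wh) : InP k wh := by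
  obtain ⟨hb, hc⟩ := h
  constructor
  · calc (∑ i, wh i)
        = ∑ i ∈ Finset.univ.filter (fun i => wh i = 1), wh i :=
          (Finset.sum_filter_of_ne (fun i _ hne => (hb i).resolve_left hne)).symm
      _ = ∑ _i ∈ Finset.univ.filter (fun i => wh i = 1), (1 : ℝ) :=
          Finset.sum_congr rfl (fun i hi => (Finset.mem_filter.mp hi).2)
      _ = (k : ℝ) := by rw [Finset.sum_const, hc, nsmul_eq_mul, mul_one]
  · intro i; rcases hb i with h | h <;> simp [h]

theorem stmt7
    {m n : ℕ} (A : Matrix (Fin m) (Fin n) ℝ)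
    (x : Fin n → ℝ) (ν y : Fin m → ℝ) (hy : y = A.mulVec x + ν)
    (k : ℕ) (hk : 0 < k)
    (S : Finset (Fin n)) (hS : IsTopK x k S)
    (ν' : Fin m → ℝ) (hν' : ν' = A.mulVec (restr x Sᶜ) + ν)
    (ω : ℕ) (hω : 1 ≤ ω)
    (wh : Fin n → ℝ) (hwh : InW k wh) (hsupp : supp (restr x S) ⊆ supp wh)
    (xp : Fin n → ℝ) (hxp : Sparse k xp)
    (up : Fin n → ℝ) (hup : up = xp + A.transpose.mulVec (y - A.mulVec xp))
    (w : ℕ → Fin n → ℝ) (hw : SCM A y k ω up w) :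
    n2 (y - A.mulVec (up * ∏ l ∈ Finset.range ω, w l))
      ≤ n2 (y - A.mulVec (up * wh))
        + ∑ i ∈ Finset.Icc 1 (ω - 1),
            n2 (A.mulVec ((up - restr x S) * (∏ l ∈ Finset.range i, w l)
              * ((1 : Fin n → ℝ) - wh))) := by
  have hwhP : InP k wh := inW_inP hwh
  have hzero : ∀ P : Fin n → ℝ, up * P * wh = up * P - (up - restr x S) * P * (1 - wh) := by
    intro P
    funext i
    simp only [Pi.mul_apply, Pi.sub_apply, Pi.one_apply]
    rcases hwh.1 i with h0 | h1
    · have hx : restr x S i = 0 := by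
        by_contra hne
        have hmem : i ∈ supp (restr x S) := by simp [supp, hne]
        have := hsupp hmem
        simp [supp, h0] at this
      rw [h0, hx]; ring
    · rw [h1]; ring
  revert hw
  induction ω, hω using Nat.le_induction with
  | base =>
    intro hw
    obtain ⟨_, hmin⟩ := hw 0 (by norm_num)
    have h := hmin wh hwhP
    simpa [Finset.prod_range_one] using h
  | succ ω hω ih =>
    intro hw
    have hwω : SCM A y k ω up w := fun j hj => hw j (hj.trans (Nat.lt_succ_self ω))
    obtain ⟨_, hmin⟩ := hw ω (Nat.lt_succ_self ω)
    have h1 := hmin wh hwhP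
    set P := ∏ l ∈ Finset.range ω, w l with hP
    have h2 : y - A.mulVec (up * P * wh)
        = (y - A.mulVec (up * P)) + A.mulVec ((up - restr x S) * P * (1 - wh)) := by
      rw [hzero P, Matrix.mulVec_sub]
      abel
    have h3 := n2_triangle (y - A.mulVec (up * P))
      (A.mulVec ((up - restr x S) * P * (1 - wh)))
    have h4 := ih hwω
    have hsum : ∑ i ∈ Finset.Icc 1 (ω + 1 - 1),
        n2 (A.mulVec ((up - restr x S) * (∏ l ∈ Finset.range i, w l)
          * ((1 : Fin n → ℝ) - wh)))
        = (∑ i ∈ Finset.Icc 1 (ω - 1),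
            n2 (A.mulVec ((up - restr x S) * (∏ l ∈ Finset.range i, w l)
              * ((1 : Fin n → ℝ) - wh))))
          + n2 (A.mulVec ((up - restr x S) * P * ((1 : Fin n → ℝ) - wh))) := by
      have hωeq : ω - 1 + 1 = ω := Nat.succ_pred_eq_of_pos hω
      rw [Nat.add_sub_cancel, ← hωeq, Finset.sum_Icc_succ_top (by omega), hωeq]
    rw [Finset.prod_range_succ, ← hP, hsum, ← mul_assoc up P (w ω)]
    rw [h2] at h1
    linarith
end
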